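/- arXiv:1902.00010 — 3 statements merged into one kernel-verified Lean document; each statement's English description precedes it below -/
import Mathlib

section
/- For every even integer d ≥ 2 there exists an irreducible homogeneous polynomial f ∈ ℂ[z₀,z₁,z₂,z₃] of degree d such that the zero locus V(f) ⊂ ℂℙ³ contains infinitely many twistor lines, i.e. the set of 2-dimensional complex subspaces W ⊆ ℂ⁴ with j̃(W) = W on which f vanishes identically is infinite. -/
/-!
The twistor line through `(c, 0, 1, 0)` consists of the points `(m c, n c̄, m, n)`, on which
`f = z₀ᵏz₃ᵏ - z₁ᵏz₂ᵏ - a z₂ᵏz₃ᵏ` takes the value `mᵏnᵏ (cᵏ - c̄ᵏ - a)`. For `a = 2i` this vanishes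
whenever `Im (cᵏ) = 1`, which happens for infinitely many `c`. As a polynomial in `z₀` over
`ℂ[z₁, z₂, z₃]`, `f = z₃ᵏ z₀ᵏ - z₂ᵏ (z₁ᵏ - (ζ z₃)ᵏ)` with `ζᵏ = -a`, which is Eisenstein at the
prime `z₁ - ζ z₃`; hence `f` is irreducible.
-/

/-- The conjugate-linear map `j̃ : ℂ⁴ → ℂ⁴`,
`j̃(z₀,z₁,z₂,z₃) = (−conj z₁, conj z₀, −conj z₃, conj z₂)`,
inducing the fixed-point-free anti-holomorphic involution `j` on `ℂℙ³`. -/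
noncomputable def jt (z : Fin 4 → ℂ) : Fin 4 → ℂ :=
  ![-(starRingEnd ℂ) (z 1), (starRingEnd ℂ) (z 0), -(starRingEnd ℂ) (z 3), (starRingEnd ℂ) (z 2)]

open MvPolynomial ComplexConjugate

theorem Polynomial.irreducible_C_mul_X_pow_add_C {R : Type*} [CommRing R] [IsDomain R]
    {P : Ideal R} (hP : P.IsPrime) {a b : R} {k : ℕ} (hk : 0 < k)
    (ha : a ∉ P) (hb : b ∈ P) (hb2 : b ∉ P ^ 2) (hab : IsRelPrime a b) :
    Irreducible (C a * X ^ k + C b) := by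
  have ha0 : a ≠ 0 := fun h => ha (h ▸ P.zero_mem)
  have hcoeff (n : ℕ) :
      (C a * X ^ k + C b).coeff n = (if n = k then a else 0) + if n = 0 then b else 0 := by
    simp [coeff_C, coeff_C_mul, coeff_X_pow]
  have hdeg : (C a * X ^ k + C b).degree = (k : WithBot ℕ) := by
    rw [degree_add_eq_left_of_degree_lt] <;> rw [degree_C_mul_X_pow k ha0]
    exact degree_C_le.trans_lt (by exact_mod_cast hk)
  have hnat : (C a * X ^ k + C b).natDegree = k := natDegree_eq_of_degree_eq_some hdeg
  refine irreducible_of_eisenstein_criterion hP ?_ ?_ (by rw [hdeg]; exact_mod_cast hk) ?_ ?_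
  · simpa [leadingCoeff, hnat, hcoeff, hk.ne'] using ha
  · intro n hn
    rw [hdeg, Nat.cast_lt] at hn
    rw [hcoeff, if_neg hn.ne, zero_add]
    split_ifs
    exacts [hb, P.zero_mem]
  · simpa [hcoeff, hk.ne] using hb2
  · intro r hr
    rw [C_dvd_iff_dvd_coeff] at hr
    exact hab (by simpa [hcoeff, hk.ne'] using hr k) (by simpa [hcoeff, hk.ne] using hr 0)

theorem Polynomial.not_X_sq_dvd_X_add_C_pow_sub_C_pow {R : Type*} [CommRing R] [IsDomain R]
    [CharZero R] {r : R} (hr : r ≠ 0) {k : ℕ} (hk : k ≠ 0) :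
    ¬ X ^ 2 ∣ (X + C r) ^ k - C r ^ k := by
  intro h
  have h1 := X_pow_dvd_iff.mp h 1 one_lt_two
  rw [← C_pow, coeff_sub, coeff_X_add_C_pow, coeff_C, if_neg one_ne_zero, sub_zero,
    Nat.choose_one_right] at h1
  exact mul_ne_zero (pow_ne_zero _ hr) (Nat.cast_ne_zero.mpr hk) h1

theorem MvPolynomial.finSuccEquiv_C {R : Type*} [CommSemiring R] {n : ℕ} (r : R) :
    finSuccEquiv R n (C r) = Polynomial.C (C r) := by
  simp [finSuccEquiv_apply]

theorem MvPolynomial.prime_X_zero_sub_C_mul_X_succ {R : Type*} [CommRing R] [IsDomain R] {n : ℕ}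
    (r : R) (i : Fin n) : Prime (X 0 - C r * X i.succ : MvPolynomial (Fin (n + 1)) R) := by
  have h : (finSuccEquiv R n).toMulEquiv (X 0 - C r * X i.succ) =
      Polynomial.X - Polynomial.C (C r * X i) := by
    simp [finSuccEquiv_apply]
  exact (MulEquiv.prime_iff _).mp (h ▸ Polynomial.prime_X_sub_C _)

noncomputable def twistorPoly (k : ℕ) (a : ℂ) : MvPolynomial (Fin 4) ℂ :=
  X 0 ^ k * X 3 ^ k - X 1 ^ k * X 2 ^ k - C a * (X 2 ^ k * X 3 ^ k)

theorem isHomogeneous_twistorPoly (k : ℕ) (a : ℂ) : (twistorPoly k a).IsHomogeneous (k + k) := by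
  have hX (i : Fin 4) : (X i ^ k : MvPolynomial (Fin 4) ℂ).IsHomogeneous k := by
    simpa using (isHomogeneous_X ℂ i).pow k
  exact (((hX 0).mul (hX 3)).sub ((hX 1).mul (hX 2))).sub (((hX 2).mul (hX 3)).C_mul a)

theorem irreducible_twistorPoly {k : ℕ} (hk : 0 < k) {a : ℂ} (ha : a ≠ 0) :
    Irreducible (twistorPoly k a) := by
  obtain ⟨ζ, hζ⟩ := IsAlgClosed.exists_pow_nat_eq (-a) hk
  obtain rfl : a = -ζ ^ k := by rw [hζ, neg_neg]
  have hζ0 : ζ ≠ 0 := by rintro rfl; exact ha (by simp [zero_pow hk.ne'])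
  set q : MvPolynomial (Fin 3) ℂ := X 0 - C ζ * X 2
  set b : MvPolynomial (Fin 3) ℂ := -(X 1 ^ k * (X 0 ^ k - (C ζ * X 2) ^ k))
  have hf : (finSuccEquiv ℂ 3).toMulEquiv (twistorPoly k (-ζ ^ k)) =
      Polynomial.C (X 2 ^ k) * Polynomial.X ^ k + Polynomial.C b := by
    show finSuccEquiv ℂ 3 _ = _
    rw [twistorPoly, show (1 : Fin 4) = (0 : Fin 3).succ from rfl,
      show (2 : Fin 4) = (1 : Fin 3).succ from rfl, show (3 : Fin 4) = (2 : Fin 3).succ from rfl]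
    simp only [map_sub, map_mul, map_pow, map_neg, finSuccEquiv_X_zero, finSuccEquiv_X_succ,
      finSuccEquiv_C, b]
    ring
  have hq : Prime q := prime_X_zero_sub_C_mul_X_succ ζ 1
  rw [← MulEquiv.irreducible_iff (finSuccEquiv ℂ 3).toMulEquiv, hf]
  refine Polynomial.irreducible_C_mul_X_pow_add_C
    ((Ideal.span_singleton_prime hq.ne_zero).mpr hq) hk ?_ ?_ ?_ ?_
  · rw [Ideal.mem_span_singleton]
    intro h
    simpa [q] using map_dvd (eval ![ζ, 0, 1]) h
  · exact Ideal.mem_span_singleton.mpr ((sub_dvd_pow_sub_pow _ _ k).mul_left _).neg_right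
  · rw [Ideal.span_singleton_pow, Ideal.mem_span_singleton]
    intro h
    have := map_dvd (aeval ![Polynomial.X + Polynomial.C ζ, 1, 1]) h
    simp only [map_pow, map_sub, map_mul, map_neg, aeval_X, algHom_C, Polynomial.algebraMap_eq,
      Matrix.cons_val_zero, Matrix.cons_val_one, Matrix.cons_val, mul_one, one_pow, one_mul,
      add_sub_cancel_right, neg_sub, q, b] at this
    exact Polynomial.not_X_sq_dvd_X_add_C_pow_sub_C_pow hζ0 hk.ne' (dvd_sub_comm.mp this)
  · refine IsRelPrime.pow_left ?_
    rw [(X_prime : Prime (X 2 : MvPolynomial (Fin 3) ℂ)).irreducible.isRelPrime_iff_not_dvd]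
    intro h
    simpa [b, zero_pow hk.ne'] using map_dvd (eval ![1, 1, 0]) h

theorem jt_add (z w : Fin 4 → ℂ) : jt (z + w) = jt z + jt w := by
  ext i; fin_cases i <;> simp [jt] <;> ring

theorem jt_smul (c : ℂ) (z : Fin 4 → ℂ) : jt (c • z) = conj c • jt z := by
  ext i; fin_cases i <;> simp [jt]

theorem jt_jt (z : Fin 4 → ℂ) : jt (jt z) = -z := by
  ext i; fin_cases i <;> simp [jt]

theorem jt_zero : jt 0 = 0 := by
  simpa using jt_smul 0 0

def twistorLine (v : Fin 4 → ℂ) : Submodule ℂ (Fin 4 → ℂ) := Submodule.span ℂ {v, jt v}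

theorem jt_mem_twistorLine {v z : Fin 4 → ℂ} (hz : z ∈ twistorLine v) :
    jt z ∈ twistorLine v := by
  obtain ⟨m, n, rfl⟩ := Submodule.mem_span_pair.mp hz
  rw [jt_add, jt_smul, jt_smul, jt_jt]
  exact Submodule.mem_span_pair.mpr ⟨-conj n, conj m, by rw [smul_neg, neg_smul]; abel⟩

theorem jt_image_twistorLine (v : Fin 4 → ℂ) :
    jt '' (twistorLine v : Set (Fin 4 → ℂ)) = twistorLine v := by
  refine (Set.image_subset_iff.mpr fun z => jt_mem_twistorLine).antisymm fun z hz => ?_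
  exact ⟨jt (-z), jt_mem_twistorLine (neg_mem hz), by rw [jt_jt, neg_neg]⟩

theorem linearIndependent_jt {v : Fin 4 → ℂ} (hv : v ≠ 0) : LinearIndependent ℂ ![v, jt v] := by
  rw [linearIndependent_fin2]
  refine ⟨fun h => hv (by simpa [jt_jt, jt_zero] using congrArg jt h), fun a ha => hv ?_⟩
  simp only [Matrix.cons_val_one, Matrix.cons_val_zero] at ha
  -- since `j̃² = -1`, `v = a • j̃ v` would force `(1 + |a|²) • v = 0`
  have hv' : v = -(a * conj a) • v :=
    calc v = a • jt (a • jt v) := by rw [ha, ha]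
      _ = -(a * conj a) • v := by rw [jt_smul, jt_jt]; module
  have hpos : (1 + a * conj a : ℂ) ≠ 0 := by
    rw [Complex.mul_conj]
    exact_mod_cast (by linarith [Complex.normSq_nonneg a] : (0 : ℝ) < 1 + Complex.normSq a).ne'
  refine (smul_eq_zero.mp ?_).resolve_left hpos
  linear_combination (norm := module) hv'

theorem finrank_twistorLine {v : Fin 4 → ℂ} (hv : v ≠ 0) :
    Module.finrank ℂ (twistorLine v) = 2 := by
  rw [twistorLine, ← Matrix.range_cons_cons_empty, finrank_span_eq_card (linearIndependent_jt hv),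
    Fintype.card_fin]

theorem jt_cons_zero_one_zero (c : ℂ) : jt ![c, 0, 1, 0] = ![0, conj c, 0, 1] := by
  ext i; fin_cases i <;> simp [jt]

theorem eval_twistorPoly_eq_zero {k : ℕ} {c : ℂ} {w : Fin 4 → ℂ}
    (hw : w ∈ twistorLine ![c, 0, 1, 0]) :
    eval w (twistorPoly k (c ^ k - conj c ^ k)) = 0 := by
  obtain ⟨m, n, rfl⟩ := Submodule.mem_span_pair.mp hw
  simp only [twistorPoly, jt_cons_zero_one_zero, Matrix.smul_cons, Matrix.add_cons,
    Matrix.smul_empty, Matrix.empty_add_empty, Matrix.head_cons, Matrix.tail_cons, smul_eq_mul,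
    mul_zero, mul_one, add_zero, zero_add, map_sub, map_mul, map_pow, eval_X, eval_C,
    Matrix.cons_val]
  ring

theorem twistorLine_injective : Function.Injective fun c : ℂ => twistorLine ![c, 0, 1, 0] := by
  intro c c' (h : twistorLine _ = twistorLine _)
  have hc : ![c, 0, 1, 0] ∈ twistorLine ![c', 0, 1, 0] := h ▸ Submodule.subset_span (by simp)
  obtain ⟨m, n, hmn⟩ := Submodule.mem_span_pair.mp hc
  have h0 : m * c' = c := by simpa [jt_cons_zero_one_zero] using congr_fun hmn 0
  have h2 : m = 1 := by simpa [jt_cons_zero_one_zero] using congr_fun hmn 2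
  rw [← h0, h2, one_mul]

theorem infinite_setOf_pow_sub_conj_pow {k : ℕ} (hk : 0 < k) :
    {c : ℂ | c ^ k - conj c ^ k = 2 * Complex.I}.Infinite := by
  have hline : {w : ℂ | w.im = 1}.Infinite :=
    Set.infinite_of_injective_forall_mem (f := fun t : ℝ => t + Complex.I)
      (fun s t h => by simpa using h) (fun t => by simp)
  convert hline.preimage (f := fun c : ℂ => c ^ k)
    (fun w _ => IsAlgClosed.exists_pow_nat_eq w hk) using 1
  ext c
  simp only [Set.mem_ofPred_eq, Set.mem_preimage, ← map_pow, Complex.sub_conj]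
  simp [Complex.ext_iff]

/-- For every even integer `d ≥ 2` there exists an irreducible homogeneous polynomial `f` of
degree `d` on `ℂ⁴` whose zero locus `V(f) ⊆ ℂℙ³` contains infinitely many twistor lines:
the set of 2-dimensional complex subspaces `W ⊆ ℂ⁴` with `j̃(W) = W` on which `f` vanishes
identically is infinite. -/
theorem stmt1 (d : ℕ) (hd : 2 ≤ d) (hde : Even d) :
    ∃ f : MvPolynomial (Fin 4) ℂ, Irreducible f ∧ f.IsHomogeneous d ∧
      {W : Submodule ℂ (Fin 4 → ℂ) |
        Module.finrank ℂ W = 2 ∧ jt '' (W : Set (Fin 4 → ℂ)) = (W : Set (Fin 4 → ℂ)) ∧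
        ∀ w ∈ W, MvPolynomial.eval w f = 0}.Infinite := by
  obtain ⟨k, rfl⟩ := hde
  have hk : 0 < k := by omega
  refine ⟨twistorPoly k (2 * Complex.I), irreducible_twistorPoly hk (by simp),
    isHomogeneous_twistorPoly k _, ?_⟩
  refine ((infinite_setOf_pow_sub_conj_pow hk).image twistorLine_injective.injOn).mono ?_
  rintro _ ⟨c, hc, rfl⟩
  refine ⟨finrank_twistorLine fun h => by simpa using congr_fun h 2, jt_image_twistorLine _,
    fun w hw => ?_⟩
  rw [← Set.mem_ofPred_eq.mp hc]
  exact eval_twistorPoly_eq_zero hw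
end

section
/- For every nonzero z ∈ ℂ⁴, the fiber of the twistor projection π through the point [z] ∈ ℂℙ³ is the projectivization of the 2-dimensional complex subspace spanned by z and j̃(z); that is, π⁻¹(π[z]) = ℙ(span_ℂ{z, j̃(z)}). -/
lemma jt_ne_zero {z : Fin 4 → ℂ} (hz : z ≠ 0) : jt z ≠ 0 := by
  intro h
  apply hz
  have h0 := congrFun h 0
  have h1 := congrFun h 1
  have h2 := congrFun h 2
  have h3 := congrFun h 3
  simp [jt] at h0 h1 h2 h3
  funext i
  fin_cases i <;> simp [h0, h1, h2, h3]

/-- The embedding `ℂ → ℍ` identifying `ℂ` with the subfield of `ℍ` spanned by `1` and `i`. -/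
noncomputable def toQ (z : ℂ) : Quaternion ℝ := ⟨z.re, z.im, 0, 0⟩

/-- The imaginary unit `j ∈ ℍ`. -/
noncomputable def qJ : Quaternion ℝ := ⟨0, 0, 1, 0⟩

lemma toQ_add_mul (a b : ℂ) :
    toQ a + toQ b * qJ = (⟨a.re, a.im, b.re, b.im⟩ : Quaternion ℝ) := by
  ext <;> simp [Quaternion.re_mul, Quaternion.imI_mul, Quaternion.imJ_mul, Quaternion.imK_mul] <;> simp [toQ, qJ]

/-- The vector-level twistor projection `(z₀,z₁,z₂,z₃) ↦ (z₀+z₁j, z₂+z₃j) ∈ ℍ²`. -/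
noncomputable def piv (z : Fin 4 → ℂ) : Fin 2 → Quaternion ℝ :=
  ![toQ (z 0) + toQ (z 1) * qJ, toQ (z 2) + toQ (z 3) * qJ]

lemma piv_ne_zero {z : Fin 4 → ℂ} (hz : z ≠ 0) : piv z ≠ 0 := by
  intro h
  apply hz
  have h0 := congrFun h 0
  have h1 := congrFun h 1
  simp only [piv, toQ_add_mul, Matrix.cons_val_zero, Matrix.cons_val_one, Matrix.head_cons,
    Pi.zero_apply] at h0 h1
  rw [Quaternion.ext_iff] at h0 h1
  simp at h0 h1
  funext i
  fin_cases i <;> apply Complex.ext <;> simp [h0.1, h0.2.1, h0.2.2.1, h0.2.2.2,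
    h1.1, h1.2.1, h1.2.2.1, h1.2.2.2] <;> rfl

/-- The twistor projection `π : ℂℙ³ → ℍℙ¹`, `π[z₀,z₁,z₂,z₃] = [z₀+z₁j, z₂+z₃j]`,
where `ℍℙ¹` is the projectivization of `ℍ²` as a left `ℍ`-module. -/
noncomputable def twistorProj (x : Projectivization ℂ (Fin 4 → ℂ)) :
    Projectivization (Quaternion ℝ) (Fin 2 → Quaternion ℝ) :=
  Projectivization.mk (Quaternion ℝ) (piv x.rep) (piv_ne_zero x.rep_nonzero)

/-- The projectivization `ℙ(W) ⊆ ℂℙ³` of a complex subspace `W ⊆ ℂ⁴`: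
the set of points of `ℂℙ³` whose representatives lie in `W`. -/
def projSet (W : Submodule ℂ (Fin 4 → ℂ)) : Set (Projectivization ℂ (Fin 4 → ℂ)) :=
  {x | x.rep ∈ W}

/-!
Every quaternion is `a + b j` with `a b : ℂ`, and the relation `j c = conj c j` gives
`piv (a • z + b • j̃ z) = (a + b j) • piv z`. So, `piv` being injective, the quaternionic
multiples of `piv z` are exactly the images of the vectors of `span_ℂ {z, j̃ z}`.
-/

lemma exists_toQ_add_toQ_mul_qJ_eq (q : Quaternion ℝ) : ∃ a b : ℂ, toQ a + toQ b * qJ = q :=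
  ⟨⟨q.re, q.imI⟩, ⟨q.imJ, q.imK⟩, by rw [toQ_add_mul]; rfl⟩

lemma piv_add_smul_jt (a b : ℂ) (z : Fin 4 → ℂ) :
    piv (a • z + b • jt z) = (toQ a + toQ b * qJ) • piv z := by
  funext i
  rw [Pi.smul_apply, smul_eq_mul]
  fin_cases i <;> ext <;>
    simp [piv, jt, Quaternion.re_mul, Quaternion.imI_mul, Quaternion.imJ_mul, Quaternion.imK_mul] <;>
    simp [toQ, qJ] <;> ring

lemma piv_smul (c : ℂ) (z : Fin 4 → ℂ) : piv (c • z) = toQ c • piv z := by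
  simpa [show toQ 0 = 0 from rfl] using piv_add_smul_jt c 0 z

lemma piv_injective : Function.Injective piv := by
  intro w v h
  simp [piv, funext_iff, toQ_add_mul, Quaternion.ext_iff] at h
  funext i
  fin_cases i <;> apply Complex.ext <;> simp [h]

lemma twistorProj_mk (z : Fin 4 → ℂ) (hz : z ≠ 0) :
    twistorProj (Projectivization.mk ℂ z hz) =
      Projectivization.mk (Quaternion ℝ) (piv z) (piv_ne_zero hz) := by
  obtain ⟨c, hc⟩ := Projectivization.exists_smul_eq_mk_rep ℂ z hz
  rw [twistorProj, Projectivization.mk_eq_mk_iff']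
  exact ⟨toQ c, by rw [← piv_smul, ← hc, Units.smul_def]⟩

lemma mk_piv_eq_mk_piv_iff_mem_span {w z : Fin 4 → ℂ} (hw : w ≠ 0) (hz : z ≠ 0) :
    Projectivization.mk (Quaternion ℝ) (piv w) (piv_ne_zero hw) =
        Projectivization.mk (Quaternion ℝ) (piv z) (piv_ne_zero hz) ↔
      w ∈ Submodule.span ℂ {z, jt z} := by
  rw [Projectivization.mk_eq_mk_iff', Submodule.mem_span_pair]
  constructor
  · rintro ⟨q, hq⟩
    obtain ⟨a, b, rfl⟩ := exists_toQ_add_toQ_mul_qJ_eq q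
    exact ⟨a, b, piv_injective (by rw [piv_add_smul_jt, hq])⟩
  · rintro ⟨a, b, rfl⟩
    exact ⟨toQ a + toQ b * qJ, (piv_add_smul_jt a b z).symm⟩

/-- For every nonzero `z ∈ ℂ⁴`, the fiber of the twistor projection `π` through the point
`[z] ∈ ℂℙ³` is the projectivization of the 2-dimensional complex subspace spanned by `z` and
`j̃(z)`: `π⁻¹(π[z]) = ℙ(span_ℂ{z, j̃(z)})`. -/
theorem stmt4 (z : Fin 4 → ℂ) (hz : z ≠ 0) :
    twistorProj ⁻¹' {twistorProj (Projectivization.mk ℂ z hz)} =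
      projSet (Submodule.span ℂ {z, jt z}) := by
  ext x
  rw [Set.mem_preimage, Set.mem_singleton_iff, twistorProj_mk, twistorProj]
  exact mk_piv_eq_mk_piv_iff_mem_span x.rep_nonzero hz
end

section
/- If W₁ and W₂ are distinct 2-dimensional complex subspaces of ℂ⁴ with j̃(W₁) = W₁ and j̃(W₂) = W₂, then W₁ ∩ W₂ = {0}; in other words, any two distinct twistor lines in ℂℙ³ are disjoint. -/
section QuaternionicStructure

variable {V : Type*} [AddCommGroup V] [Module ℂ V] {J : V →ₛₗ[starRingEnd ℂ] V}

theorem linearIndependent_pair_apply_of_apply_apply_eq_neg (hJ : ∀ v, J (J v) = -v)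
    {v : V} (hv : v ≠ 0) : LinearIndependent ℂ ![v, J v] := by
  refine (LinearIndependent.pair_iff' hv).mpr fun c hc => hv ?_
  have h : (1 + Complex.normSq c : ℂ) • v = 0 := by
    calc (1 + Complex.normSq c : ℂ) • v = v + (starRingEnd ℂ c * c) • v := by
          rw [Complex.normSq_eq_conj_mul_self, add_smul, one_smul]
      _ = v + J (J v) := by rw [← hc, map_smulₛₗ, ← hc, smul_smul]
      _ = 0 := by rw [hJ, add_neg_cancel]
  refine (smul_eq_zero.mp h).resolve_left ?_
  exact_mod_cast (add_pos_of_pos_of_nonneg one_pos (Complex.normSq_nonneg c)).ne'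

theorem two_le_finrank_of_apply_mem [FiniteDimensional ℂ V] (hJ : ∀ v, J (J v) = -v)
    {W : Submodule ℂ V} (hW : ∀ v ∈ W, J v ∈ W) (hW₀ : W ≠ ⊥) :
    2 ≤ Module.finrank ℂ W := by
  obtain ⟨v, hvW, hv⟩ := W.exists_mem_ne_zero_of_ne_bot hW₀
  have hspan : Submodule.span ℂ (Set.range ![v, J v]) ≤ W := by
    rw [Submodule.span_le, Set.range_subset_iff]
    intro i
    fin_cases i
    exacts [hvW, hW v hvW]
  calc 2 = Module.finrank ℂ (Submodule.span ℂ (Set.range ![v, J v])) := by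
        rw [finrank_span_eq_card (linearIndependent_pair_apply_of_apply_apply_eq_neg hJ hv),
          Fintype.card_fin]
    _ ≤ Module.finrank ℂ W := Submodule.finrank_mono hspan

end QuaternionicStructure

noncomputable def jtₛₗ : (Fin 4 → ℂ) →ₛₗ[starRingEnd ℂ] (Fin 4 → ℂ) where
  toFun := jt
  map_add' x y := by funext i; fin_cases i <;> simp [jt, add_comm]
  map_smul' c x := by funext i; fin_cases i <;> simp [jt]

theorem jtₛₗ_apply_apply (z : Fin 4 → ℂ) : jtₛₗ (jtₛₗ z) = -z := by
  funext i; fin_cases i <;> simp [jtₛₗ, jt]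

/-- Distinct 2-dimensional complex subspaces `W₁ ≠ W₂` of `ℂ⁴` with `j̃(W₁) = W₁` and
`j̃(W₂) = W₂` intersect trivially: any two distinct twistor lines in `ℂℙ³` are disjoint. -/
theorem stmt7 (W₁ W₂ : Submodule ℂ (Fin 4 → ℂ))
    (h1 : Module.finrank ℂ W₁ = 2) (h2 : Module.finrank ℂ W₂ = 2)
    (hj1 : jt '' (W₁ : Set (Fin 4 → ℂ)) = (W₁ : Set (Fin 4 → ℂ)))
    (hj2 : jt '' (W₂ : Set (Fin 4 → ℂ)) = (W₂ : Set (Fin 4 → ℂ)))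
    (hne : W₁ ≠ W₂) :
    W₁ ⊓ W₂ = ⊥ := by
  by_contra hK
  have hstable : ∀ v ∈ W₁ ⊓ W₂, jtₛₗ v ∈ W₁ ⊓ W₂ := fun v hv =>
    ⟨hj1.subset (Set.mem_image_of_mem jt hv.1), hj2.subset (Set.mem_image_of_mem jt hv.2)⟩
  have hrank := two_le_finrank_of_apply_mem jtₛₗ_apply_apply hstable hK
  have e1 : W₁ ⊓ W₂ = W₁ := Submodule.eq_of_le_of_finrank_le inf_le_left (h1 ▸ hrank)
  have e2 : W₁ ⊓ W₂ = W₂ := Submodule.eq_of_le_of_finrank_le inf_le_right (h2 ▸ hrank)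
  exact hne (e1.symm.trans e2)
end
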